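/- Strong-confluence critical-pair criterion for multiset rewriting: let R be a set of multiset rules such that every critical peak r₁ + (l₂ - O) ↞ l₁ + (l₂ - O) ↠ (l₁ - O) + r₂ (for rules (l₁,r₁),(l₂,r₂) and nonempty O ≤ l₁, O ≤ l₂) is joinable by at most one step on each side (→= ∘ ←=). Then → is confluent, without any termination assumption. -/
import Mathlib

/-- One-step multiset rewriting generated by a set of rules `R`. -/
def MRStep {A : Type*} (R : Set (Multiset A × Multiset A)) :
    Multiset A → Multiset A → Prop :=
  fun M N => ∃ lr ∈ R, ∃ K, M = lr.1 + K ∧ N = lr.2 + K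

lemma MRStep.add_right {A : Type*} {R : Set (Multiset A × Multiset A)}
    {M N : Multiset A} (h : MRStep R M N) (J : Multiset A) :
    MRStep R (M + J) (N + J) := by
  obtain ⟨lr, hlr, K, h1, h2⟩ := h
  exact ⟨lr, hlr, K + J, by simp [h1, add_assoc], by simp [h2, add_assoc]⟩

lemma ReflGen.add_right {A : Type*} {R : Set (Multiset A × Multiset A)}
    {M N : Multiset A} (h : Relation.ReflGen (MRStep R) M N) (J : Multiset A) :
    Relation.ReflGen (MRStep R) (M + J) (N + J) := by
  cases h with
  | refl => exact Relation.ReflGen.refl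
  | single h => exact Relation.ReflGen.single (h.add_right J)



/-- Strong-confluence critical-pair criterion: if every critical peak joins
in at most one step on each side, then multiset rewriting is confluent,
without any termination assumption. -/
theorem multiset_strong_critical_pair_confluence {A : Type*} [DecidableEq A]
    (R : Set (Multiset A × Multiset A))
    (hcp : ∀ l₁ r₁ l₂ r₂, (l₁, r₁) ∈ R → (l₂, r₂) ∈ R →
      ∀ O : Multiset A, O ≠ 0 → O ≤ l₁ → O ≤ l₂ →
      ∃ D, Relation.ReflGen (MRStep R) (r₁ + (l₂ - O)) D ∧
        Relation.ReflGen (MRStep R) ((l₁ - O) + r₂) D) :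
    ∀ M N₁ N₂, Relation.ReflTransGen (MRStep R) M N₁ →
      Relation.ReflTransGen (MRStep R) M N₂ →
      ∃ D, Relation.ReflTransGen (MRStep R) N₁ D ∧
        Relation.ReflTransGen (MRStep R) N₂ D := by
  intro M N₁ N₂ h1 h2
  have key : ∀ a b c, MRStep R a b → MRStep R a c →
      ∃ d, Relation.ReflGen (MRStep R) b d ∧ Relation.ReflTransGen (MRStep R) c d := by
    rintro a b c ⟨⟨l₁, r₁⟩, hr1, K₁, rfl, rfl⟩ ⟨⟨l₂, r₂⟩, hr2, K₂, heq, rfl⟩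
    simp only at *
    set O : Multiset A := l₁ - K₂ with hO
    have hO1 : O ≤ l₁ := Multiset.sub_le_self _ _
    have hcount : ∀ x, l₁.count x + K₁.count x = l₂.count x + K₂.count x := by
      intro x
      have := congrArg (Multiset.count x) heq
      simpa [Multiset.count_add] using this
    have hO2 : O ≤ l₂ := by
      rw [Multiset.le_iff_count]
      intro x
      have := hcount x
      simp only [hO, Multiset.count_sub]
      omega
    set J : Multiset A := K₁ - (l₂ - O) with hJ
    have hK1 : K₁ = (l₂ - O) + J := by
      ext x
      have := hcount x
      simp only [hJ, hO, Multiset.count_add, Multiset.count_sub]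
      omega
    have hK2 : K₂ = (l₁ - O) + J := by
      ext x
      have := hcount x
      simp only [hJ, hO, Multiset.count_add, Multiset.count_sub]
      omega
    by_cases hOz : O = 0
    · -- disjoint redexes
      have hK1' : K₁ = l₂ + J := by simpa [hOz] using hK1
      have hK2' : K₂ = l₁ + J := by simpa [hOz] using hK2
      refine ⟨r₁ + r₂ + J, ?_, ?_⟩
      · refine Relation.ReflGen.single ⟨(l₂, r₂), hr2, r₁ + J, ?_, ?_⟩
        · ext x; rw [hK1']; simp [Multiset.count_add]; omega
        · ext x; simp [Multiset.count_add]; omega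
      · refine Relation.ReflTransGen.single ⟨(l₁, r₁), hr1, r₂ + J, ?_, ?_⟩
        · ext x; rw [hK2']; simp [Multiset.count_add]; omega
        · ext x; simp [Multiset.count_add]; omega
    · obtain ⟨D, hD1, hD2⟩ := hcp l₁ r₁ l₂ r₂ hr1 hr2 O hOz hO1 hO2
      refine ⟨D + J, ?_, ?_⟩
      · have := ReflGen.add_right hD1 J
        rwa [hK1, ← add_assoc] at *
      · have := (ReflGen.add_right hD2 J).to_reflTransGen
        rw [hK2, ← add_assoc, add_comm r₂ (l₁ - O)]
        exact this
  exact Relation.church_rosser key h1 h2
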